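/- Let a₁,…,a_{n₁} be distinct complex numbers in the open upper half-plane, b₁,…,b_{n₂} distinct complex numbers in the open lower half-plane, and α₁,…,α_{n₁}, β₁,…,β_{n₂} ∈ ℂ, and define K(x) = (1/(2πi))[ Σ_{j=1}^{n₁} α_j/(x−a_j) − Σ_{j=1}^{n₂} β_j/(x−b_j) ] for x ∈ ℝ. Suppose that Σ_{j=1}^{n₁} α_j a_j^k = Σ_{j=1}^{n₂} β_j b_j^k for every k = 0, 1, …, m−1. Then for each k = 0, 1, …, m−1, the function y ↦ K(y) y^k is integrable on ℝ and ∫_ℝ K(y) y^k dy = Σ_{j=1}^{n₁} α_j a_j^k. -/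

import Mathlib

/-!
Dividing `y / (y - p) = 1 + p / (y - p)` termwise gives
`K_{α,β}(y) · y = K_{αa,βb}(y) + (Σ α_j - Σ β_j) / (2πi)`, so by induction the moment conditions
turn `K(y) y^k` into the kernel with residues `α_j a_j^k`, `β_j b_j^k`, whose residue sums agree.
For a kernel with `Σ α_j = Σ β_j` the terms `1/(y - p)` can be paired off against a common pole into
differences `(p - q) / ((y - p)(y - q))`, products of two `L²` functions, so the kernel is integrable.
Its integral is the limit of the integrals over `[-R, R]`, and
`∫_{-R}^{R} dy / (y - p) = log (R - p) - log (-R - p) → πi · sign (Im p)`,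
whence `∫ K = (Σ α_j + Σ β_j) / 2 = Σ α_j`.
-/

open MeasureTheory Real Set

/-- The rational kernel with poles `a j` in the upper half-plane and `b j` in the
lower half-plane, and residues `α j`, `β j`. -/
noncomputable def ratKernel {n₁ n₂ : ℕ} (a : Fin n₁ → ℂ) (b : Fin n₂ → ℂ)
    (α : Fin n₁ → ℂ) (β : Fin n₂ → ℂ) (x : ℝ) : ℂ :=
  (1 / (2 * Real.pi * Complex.I)) *
    (∑ j, α j / ((x : ℂ) - a j) - ∑ j, β j / ((x : ℂ) - b j))

open Complex Filter Topology

section PoleOffRealLine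

variable {p : ℂ}

lemma ofReal_sub_ne_zero_of_im_ne_zero (hp : p.im ≠ 0) (y : ℝ) : (y : ℂ) - p ≠ 0 := by
  intro h
  exact hp (by simpa using congrArg Complex.im h.symm)

lemma ofReal_sub_mem_slitPlane (hp : p.im ≠ 0) (y : ℝ) : (y : ℂ) - p ∈ slitPlane :=
  mem_slitPlane_iff.2 <| Or.inr <| by simpa using hp

lemma one_add_sq_le_mul_normSq_ofReal_sub (hp : p.im ≠ 0) (y : ℝ) :
    1 + y ^ 2 ≤ (2 + (1 + 2 * p.re ^ 2) / p.im ^ 2) * normSq ((y : ℂ) - p) := by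
  -- `y² ≤ 2 (y - Re p)² + 2 (Re p)²` and `(Im p)² ≤ normSq (y - p)`
  have hnormSq : normSq ((y : ℂ) - p) = (y - p.re) ^ 2 + p.im ^ 2 := by
    simp only [normSq_apply, sub_re, ofReal_re, sub_im, ofReal_im, zero_sub, mul_neg, neg_mul,
      neg_neg]
    ring
  have hcoef : (1 + 2 * p.re ^ 2) / p.im ^ 2 * p.im ^ 2 = 1 + 2 * p.re ^ 2 :=
    div_mul_cancel₀ _ (by positivity)
  have hcoef_nonneg : 0 ≤ (1 + 2 * p.re ^ 2) / p.im ^ 2 := by positivity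
  rw [hnormSq]
  nlinarith [sq_nonneg (y - 2 * p.re), mul_nonneg hcoef_nonneg (sq_nonneg (y - p.re))]

lemma continuous_inv_ofReal_sub (hp : p.im ≠ 0) : Continuous fun y : ℝ => ((y : ℂ) - p)⁻¹ :=
  (continuous_ofReal.sub continuous_const).inv₀ (ofReal_sub_ne_zero_of_im_ne_zero hp)

lemma memLp_two_inv_ofReal_sub (hp : p.im ≠ 0) : MemLp (fun y : ℝ => ((y : ℂ) - p)⁻¹) 2 := by
  rw [memLp_two_iff_integrable_sq_norm (continuous_inv_ofReal_sub hp).aestronglyMeasurable]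
  refine (integrable_inv_one_add_sq.const_mul (2 + (1 + 2 * p.re ^ 2) / p.im ^ 2)).mono'
    (by fun_prop) (ae_of_all _ fun y => ?_)
  have hpos : 0 < normSq ((y : ℂ) - p) := normSq_pos.2 (ofReal_sub_ne_zero_of_im_ne_zero hp y)
  have hle := one_add_sq_le_mul_normSq_ofReal_sub hp y
  rw [Real.norm_of_nonneg (by positivity), norm_inv, inv_pow, Complex.sq_norm,
    ← div_eq_mul_inv, inv_le_iff_one_le_mul₀ hpos, div_mul_eq_mul_div,
    one_le_div (by positivity)]
  exact hle

lemma integrable_inv_ofReal_sub_sub_inv_ofReal_sub {q : ℂ} (hp : p.im ≠ 0) (hq : q.im ≠ 0) :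
    Integrable fun y : ℝ => ((y : ℂ) - p)⁻¹ - ((y : ℂ) - q)⁻¹ := by
  refine (((memLp_two_inv_ofReal_sub hp).integrable_mul
    (memLp_two_inv_ofReal_sub hq)).const_mul (p - q)).congr (ae_of_all _ fun y => ?_)
  have := ofReal_sub_ne_zero_of_im_ne_zero hp y
  have := ofReal_sub_ne_zero_of_im_ne_zero hq y
  simp only [Pi.mul_apply]
  field_simp
  ring

lemma hasDerivAt_log_ofReal_sub (hp : p.im ≠ 0) (y : ℝ) :
    HasDerivAt (fun y : ℝ => log ((y : ℂ) - p)) ((y : ℂ) - p)⁻¹ y := by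
  simpa [one_div] using
    ((hasDerivAt_id y).ofReal_comp.sub_const p).clog_real (ofReal_sub_mem_slitPlane hp y)

lemma intervalIntegral_inv_ofReal_sub (hp : p.im ≠ 0) {R : ℝ} (hR : 0 < R) :
    ∫ y in -R..R, ((y : ℂ) - p)⁻¹ = log (1 - p / R) - log (-1 - p / R) := by
  rw [intervalIntegral.integral_eq_sub_of_hasDerivAt (fun y _ => hasDerivAt_log_ofReal_sub hp y)
    ((continuous_inv_ofReal_sub hp).intervalIntegrable _ _)]
  have hR' : (R : ℂ) ≠ 0 := ofReal_ne_zero.2 hR.ne'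
  have h1 : (R : ℂ) - p = R * (1 - p / R) := by field_simp
  have h2 : ((-R : ℝ) : ℂ) - p = R * (-1 - p / R) := by push_cast; field_simp
  have hne := ofReal_sub_ne_zero_of_im_ne_zero hp
  rw [h1, h2, log_ofReal_mul hR (right_ne_zero_of_mul (h1 ▸ hne R)),
    log_ofReal_mul hR (right_ne_zero_of_mul (h2 ▸ hne (-R)))]
  ring

lemma tendsto_div_ofReal_atTop (p : ℂ) : Tendsto (fun R : ℝ => p / R) atTop (𝓝 0) := by
  simpa [div_eq_mul_inv] using (tendsto_inv_atTop_zero.ofReal).const_mul p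

lemma tendsto_log_one_sub_div_ofReal_atTop (p : ℂ) :
    Tendsto (fun R : ℝ => log (1 - p / R)) atTop (𝓝 0) := by
  have h := (tendsto_div_ofReal_atTop p).const_sub 1
  rw [sub_zero] at h
  have hlog := (continuousAt_clog one_mem_slitPlane).tendsto.comp h
  rwa [Complex.log_one] at hlog

lemma tendsto_intervalIntegral_inv_ofReal_sub_of_im_pos (hp : 0 < p.im) :
    Tendsto (fun R : ℝ => ∫ y in -R..R, ((y : ℂ) - p)⁻¹) atTop (𝓝 (π * I)) := by
  have hlog : Tendsto (fun R : ℝ => log (-1 - p / R)) atTop (𝓝 (-(π * I))) := by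
    have hlim := tendsto_log_nhdsWithin_im_neg_of_re_neg_of_im_zero (z := -1) (by simp) (by simp)
    refine (by simpa using hlim : Tendsto Complex.log _ _).comp (tendsto_nhdsWithin_iff.2 ⟨?_, ?_⟩)
    · simpa using (tendsto_div_ofReal_atTop p).const_sub (-1)
    · filter_upwards [eventually_gt_atTop 0] with R hR
      simp only [sub_im, neg_im, one_im, div_ofReal_im]
      have := div_pos hp hR
      linarith
  have h := (tendsto_log_one_sub_div_ofReal_atTop p).sub hlog
  rw [zero_sub, neg_neg] at h
  refine h.congr' ?_
  filter_upwards [eventually_gt_atTop 0] with R hR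
  rw [intervalIntegral_inv_ofReal_sub hp.ne' hR]

lemma tendsto_intervalIntegral_inv_ofReal_sub_of_im_neg (hp : p.im < 0) :
    Tendsto (fun R : ℝ => ∫ y in -R..R, ((y : ℂ) - p)⁻¹) atTop (𝓝 (-(π * I))) := by
  have hlog : Tendsto (fun R : ℝ => log (-1 - p / R)) atTop (𝓝 (π * I)) := by
    have hlim := tendsto_log_nhdsWithin_im_nonneg_of_re_neg_of_im_zero (z := -1) (by simp) (by simp)
    refine (by simpa using hlim : Tendsto Complex.log _ _).comp (tendsto_nhdsWithin_iff.2 ⟨?_, ?_⟩)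
    · simpa using (tendsto_div_ofReal_atTop p).const_sub (-1)
    · filter_upwards [eventually_gt_atTop 0] with R hR
      simp only [sub_im, neg_im, one_im, div_ofReal_im]
      have := div_neg_of_neg_of_pos hp hR
      linarith
  have h := (tendsto_log_one_sub_div_ofReal_atTop p).sub hlog
  rw [zero_sub] at h
  refine h.congr' ?_
  filter_upwards [eventually_gt_atTop 0] with R hR
  rw [intervalIntegral_inv_ofReal_sub hp.ne hR]

end PoleOffRealLine

section RatKernel

variable {n₁ n₂ : ℕ} {a : Fin n₁ → ℂ} {b : Fin n₂ → ℂ} {α : Fin n₁ → ℂ} {β : Fin n₂ → ℂ}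

lemma ratKernel_mul_ofReal (ha : ∀ j, (a j).im ≠ 0) (hb : ∀ j, (b j).im ≠ 0) (y : ℝ) :
    ratKernel a b α β y * y = ratKernel a b (fun j => α j * a j) (fun j => β j * b j) y +
      (∑ j, α j - ∑ j, β j) / (2 * π * I) := by
  have hsplit : ∀ (c p : ℂ), p.im ≠ 0 → c / ((y : ℂ) - p) * y = c + c * p / ((y : ℂ) - p) := by
    intro c p hp
    have := ofReal_sub_ne_zero_of_im_ne_zero hp y
    field_simp
    ring
  simp only [ratKernel, mul_assoc, sub_mul, Finset.sum_mul, fun j => hsplit (α j) (a j) (ha j),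
    fun j => hsplit (β j) (b j) (hb j), Finset.sum_add_distrib]
  ring

lemma ratKernel_mul_pow (ha : ∀ j, (a j).im ≠ 0) (hb : ∀ j, (b j).im ≠ 0) {k : ℕ}
    (hmom : ∀ i < k, ∑ j, α j * a j ^ i = ∑ j, β j * b j ^ i) (y : ℝ) :
    ratKernel a b α β y * (y : ℂ) ^ k =
      ratKernel a b (fun j => α j * a j ^ k) (fun j => β j * b j ^ k) y := by
  induction k with
  | zero => simp
  | succ k ih =>
    rw [pow_succ, ← mul_assoc, ih fun i hi => hmom i (hi.trans k.lt_succ_self),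
      ratKernel_mul_ofReal ha hb, hmom k k.lt_succ_self, sub_self, zero_div, add_zero]
    simp only [mul_assoc, ← pow_succ]

lemma integrable_ratKernel (ha : ∀ j, (a j).im ≠ 0) (hb : ∀ j, (b j).im ≠ 0)
    (hsum : ∑ j, α j = ∑ j, β j) : Integrable (ratKernel a b α β) := by
  have hI : I.im ≠ 0 := by simp
  have hpivot : ∀ y : ℝ, ratKernel a b α β y = 1 / (2 * π * I) *
      (∑ j, α j * (((y : ℂ) - a j)⁻¹ - ((y : ℂ) - I)⁻¹) -
        ∑ j, β j * (((y : ℂ) - b j)⁻¹ - ((y : ℂ) - I)⁻¹)) := by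
    intro y
    simp only [ratKernel, mul_sub, Finset.sum_sub_distrib, ← Finset.sum_mul, hsum, div_eq_mul_inv]
    ring
  rw [funext hpivot]
  refine Integrable.const_mul (Integrable.sub ?_ ?_) _ <;>
  refine integrable_finsetSum _ fun j _ => Integrable.const_mul ?_ _
  exacts [integrable_inv_ofReal_sub_sub_inv_ofReal_sub (ha j) hI,
    integrable_inv_ofReal_sub_sub_inv_ofReal_sub (hb j) hI]

lemma intervalIntegral_ratKernel (ha : ∀ j, (a j).im ≠ 0) (hb : ∀ j, (b j).im ≠ 0) (R : ℝ) :
    ∫ y in -R..R, ratKernel a b α β y = 1 / (2 * π * I) *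
      (∑ j, α j * (∫ y in -R..R, ((y : ℂ) - a j)⁻¹) -
        ∑ j, β j * ∫ y in -R..R, ((y : ℂ) - b j)⁻¹) := by
  have hcont : ∀ p : ℂ, p.im ≠ 0 → ∀ c : ℂ, Continuous fun y : ℝ => c * ((y : ℂ) - p)⁻¹ :=
    fun p hp c => (continuous_inv_ofReal_sub hp).const_mul c
  simp only [ratKernel, div_eq_mul_inv (α _), div_eq_mul_inv (β _)]
  rw [intervalIntegral.integral_const_mul, intervalIntegral.integral_sub
      ((continuous_finsetSum _ fun j _ => hcont _ (ha j) _).intervalIntegrable _ _)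
      ((continuous_finsetSum _ fun j _ => hcont _ (hb j) _).intervalIntegrable _ _),
    intervalIntegral.integral_finsetSum fun j _ => (hcont _ (ha j) _).intervalIntegrable _ _,
    intervalIntegral.integral_finsetSum fun j _ => (hcont _ (hb j) _).intervalIntegrable _ _]
  simp only [intervalIntegral.integral_const_mul]

lemma integral_ratKernel (haU : ∀ j, 0 < (a j).im) (hbL : ∀ j, (b j).im < 0)
    (hsum : ∑ j, α j = ∑ j, β j) : ∫ y, ratKernel a b α β y = ∑ j, α j := by
  have ha : ∀ j, (a j).im ≠ 0 := fun j => (haU j).ne'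
  have hb : ∀ j, (b j).im ≠ 0 := fun j => (hbL j).ne
  refine tendsto_nhds_unique (intervalIntegral_tendsto_integral
    (integrable_ratKernel ha hb hsum) tendsto_neg_atTop_atBot tendsto_id) ?_
  simp only [id, intervalIntegral_ratKernel ha hb]
  have hlim := ((tendsto_finsetSum Finset.univ fun j _ =>
      (tendsto_intervalIntegral_inv_ofReal_sub_of_im_pos (haU j)).const_mul (α j)).sub
    (tendsto_finsetSum Finset.univ fun j _ =>
      (tendsto_intervalIntegral_inv_ofReal_sub_of_im_neg (hbL j)).const_mul (β j))).const_mul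
    (1 / (2 * π * I))
  convert hlim using 2
  have hπ : (π : ℂ) ≠ 0 := ofReal_ne_zero.2 pi_ne_zero
  simp only [← Finset.sum_mul, ← hsum]
  field_simp
  ring

end RatKernel

theorem stmt_8_general (n₁ n₂ : ℕ) (a : Fin n₁ → ℂ) (b : Fin n₂ → ℂ)
    (haU : ∀ j, 0 < (a j).im) (hbL : ∀ j, (b j).im < 0)
    (α : Fin n₁ → ℂ) (β : Fin n₂ → ℂ) (m : ℕ)
    (hmom : ∀ k < m, ∑ j, α j * a j ^ k = ∑ j, β j * b j ^ k) :
    ∀ k < m, Integrable (fun y : ℝ => ratKernel a b α β y * (y : ℂ) ^ k) ∧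
      (∫ y : ℝ, ratKernel a b α β y * (y : ℂ) ^ k) = ∑ j, α j * a j ^ k := by
  intro k hk
  have ha : ∀ j, (a j).im ≠ 0 := fun j => (haU j).ne'
  have hb : ∀ j, (b j).im ≠ 0 := fun j => (hbL j).ne
  simp only [ratKernel_mul_pow ha hb fun i hi => hmom i (hi.trans hk)]
  exact ⟨integrable_ratKernel ha hb (hmom k hk), integral_ratKernel haU hbL (hmom k hk)⟩

/-- If the moment matching conditions `Σ α_j a_j^k = Σ β_j b_j^k` hold for
`k = 0, …, m−1`, then for each such `k` the function `y ↦ K(y) y^k` is integrable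
on `ℝ` and `∫ K(y) y^k dy = Σ α_j a_j^k`. -/
theorem stmt_8 (n₁ n₂ : ℕ) (a : Fin n₁ → ℂ) (b : Fin n₂ → ℂ)
    (ha : Function.Injective a) (hb : Function.Injective b)
    (haU : ∀ j, 0 < (a j).im) (hbL : ∀ j, (b j).im < 0)
    (α : Fin n₁ → ℂ) (β : Fin n₂ → ℂ) (m : ℕ) (hm : 1 ≤ m)
    (hmom : ∀ k < m, ∑ j, α j * a j ^ k = ∑ j, β j * b j ^ k) :
    ∀ k < m, Integrable (fun y : ℝ => ratKernel a b α β y * (y : ℂ) ^ k) ∧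
      (∫ y : ℝ, ratKernel a b α β y * (y : ℂ) ^ k) = ∑ j, α j * a j ^ k :=
  stmt_8_general n₁ n₂ a b haU hbL α β m hmom
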